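/- Let E be a reproducing kernel Hilbert C*-module over a unital C*-algebra A on a set S with reproducing kernel K, and let s_0 ∈ S be such that K(s_0,s_0) is invertible in A. Then the submodule E_0 = { f ∈ E : f(s_0) = 0 } is a reproducing kernel Hilbert C*-module on S whose reproducing kernel is K_0(s,t) = K(s,t) − K(s,s_0) K(s_0,s_0)^{-1} K(s_0,t). -/

import Mathlib

open scoped RightActions

/-- The notion of Hilbert C⋆-module of the older Mathlib (right `A`-action via `Aᵐᵒᵖ`,
`⟪x, y <• a⟫ = ⟪x, y⟫ * a`); Mathlib's `CStarModule` now uses a left action `[SMul A E]`. -/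
class CStarModuleOld (A : outParam <| Type*) (E : Type*) [NonUnitalSemiring A] [StarRing A]
    [Module ℂ A] [AddCommGroup E] [Module ℂ E] [PartialOrder A] [SMul Aᵐᵒᵖ E] [Norm A] [Norm E]
    extends Inner A E where
  inner_add_right {x} {y} {z} : inner x (y + z) = inner x y + inner x z
  inner_self_nonneg {x} : 0 ≤ inner x x
  inner_self {x} : inner x x = 0 ↔ x = 0
  inner_op_smul_right {a : A} {x y : E} : inner x (y <• a) = inner x y * a
  inner_smul_right_complex {z : ℂ} {x} {y} : inner x (z • y) = z • inner x y
  star_inner x y : star (inner x y) = inner y x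
  norm_eq_sqrt_norm_inner_self x : ‖x‖ = √‖inner x x‖

/-- A *reproducing kernel Hilbert C*-module* (RKHC*M) over the C*-algebra `A` on the set `S`:
a Hilbert C*-module `E` over `A` realized (injectively) as a right `A`-submodule of the
`A`-valued functions on `S` via `toFun`, together with kernel elements `k s` such that
evaluation at `s` is given by `f ↦ ⟪k s, f⟫`, and such that the `A`-linear span of the
`k s` is dense in `E`. -/
structure RKHCM (A : Type*) (S : Type*) (E : Type*)
    [CStarAlgebra A] [PartialOrder A] [StarOrderedRing A]
    [NormedAddCommGroup E] [NormedSpace ℂ E] [SMul Aᵐᵒᵖ E] [CStarModuleOld A E] where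
  toFun : E → S → A
  injective : Function.Injective toFun
  k : S → E
  eval_eq : ∀ (f : E) (s : S), toFun f s = inner A (k s) f
  dense_span : Dense
    ((Submodule.span ℂ (Set.range fun p : S × A => k p.1 <• p.2) : Submodule ℂ E) : Set E)

variable {A : Type*} [CStarAlgebra A] [PartialOrder A] [StarOrderedRing A]
variable {S : Type*} [Nonempty S]
variable {E : Type*} [NormedAddCommGroup E] [NormedSpace ℂ E] [SMul Aᵐᵒᵖ E]
  [CStarModuleOld A E] [CompleteSpace E]

/-! Because `⟪k s₀, k s₀⟫` is invertible, `P f = f - k s₀ <• (⟪k s₀, k s₀⟫⁻¹ * ⟪k s₀, f⟫)` is a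
continuous retraction of `E` onto `E₀ = {f | ⟪k s₀, f⟫ = 0}`, and `k₀ s = P (k s)`. For `f ∈ E₀`
one has `⟪P g, f⟫ = ⟪g, f⟫`, which gives the reproducing property on `E₀` and, with `f = P (k t)`,
the formula for `K₀`. Since `P` commutes with the right action, it maps the span of the `k s <• a`
onto the span of the `k₀ s <• a`, so density in `E` passes to density in `E₀`.

The right action `<•` comes with no module axioms; they are recovered from the nondegeneracy of
the inner product. Continuity of `⟪x, ·⟫` is the C⋆-module Cauchy–Schwarz inequality. -/

namespace CStarModuleOld

omit [CompleteSpace E]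

local notation "⟪" x ", " y "⟫" => inner A x y

section

omit [StarOrderedRing A]

theorem inner_sub_right {x y z : E} : ⟪x, y - z⟫ = ⟪x, y⟫ - ⟪x, z⟫ := by
  rw [eq_sub_iff_add_eq, ← inner_add_right, sub_add_cancel]

@[simp]
theorem inner_zero_right {x : E} : ⟪x, (0 : E)⟫ = 0 := by
  simpa using (inner_sub_right (x := x) (y := 0) (z := 0))

theorem inner_sub_left {x y z : E} : ⟪x - y, z⟫ = ⟪x, z⟫ - ⟪y, z⟫ := by
  rw [← star_inner z, inner_sub_right, star_sub, star_inner, star_inner]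

theorem inner_op_smul_left {a : A} {x y : E} : ⟪x <• a, y⟫ = star a * ⟪x, y⟫ := by
  rw [← star_inner y, inner_op_smul_right, star_mul, star_inner]

theorem inner_smul_left_complex {z : ℂ} {x y : E} : ⟪z • x, y⟫ = star z • ⟪x, y⟫ := by
  rw [← star_inner y, inner_smul_right_complex, star_smul, star_inner]

theorem inner_smul_right_real {r : ℝ} {x y : E} : ⟪x, r • y⟫ = r • ⟪x, y⟫ := by
  rw [← Complex.coe_smul, inner_smul_right_complex, Complex.coe_smul]

theorem inner_smul_left_real {r : ℝ} {x y : E} : ⟪r • x, y⟫ = r • ⟪x, y⟫ := by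
  rw [← Complex.coe_smul, inner_smul_left_complex, Complex.star_def, Complex.conj_ofReal,
    Complex.coe_smul]

theorem ext_inner_left {u v : E} (h : ∀ y : E, ⟪y, u⟫ = ⟪y, v⟫) : u = v := by
  rw [← sub_eq_zero, ← inner_self (A := A), inner_sub_right, h, sub_self]

theorem op_smul_add (x : E) (a b : A) : x <• (a + b) = x <• a + x <• b :=
  ext_inner_left fun y => by simp only [inner_op_smul_right, inner_add_right, mul_add]

theorem op_smul_zero (x : E) : x <• (0 : A) = 0 :=
  ext_inner_left fun y => by simp only [inner_op_smul_right, inner_zero_right, mul_zero]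

theorem sub_op_smul (x y : E) (a : A) : (x - y) <• a = x <• a - y <• a :=
  ext_inner_left fun z => by simp only [inner_op_smul_right, inner_sub_right, sub_mul]

theorem op_smul_op_smul (x : E) (a b : A) : x <• a <• b = x <• (a * b) :=
  ext_inner_left fun y => by simp only [inner_op_smul_right, mul_assoc]

theorem op_smul_smul_complex (x : E) (c : ℂ) (a : A) : x <• (c • a) = c • (x <• a) :=
  ext_inner_left fun y => by
    simp only [inner_op_smul_right, inner_smul_right_complex, mul_smul_comm]

theorem norm_sq_eq (x : E) : ‖x‖ ^ 2 = ‖⟪x, x⟫‖ := by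
  rw [norm_eq_sqrt_norm_inner_self x, Real.sq_sqrt (norm_nonneg _)]

theorem norm_op_smul_le (x : E) (a : A) : ‖x <• a‖ ≤ ‖x‖ * ‖a‖ := by
  refine (pow_le_pow_iff_left₀ (norm_nonneg _) (by positivity) two_ne_zero).mp ?_
  rw [norm_sq_eq, inner_op_smul_right, inner_op_smul_left, mul_pow, norm_sq_eq]
  calc ‖star a * ⟪x, x⟫ * a‖ ≤ ‖star a‖ * ‖⟪x, x⟫‖ * ‖a‖ := norm_mul₃_le
    _ = ‖⟪x, x⟫‖ * ‖a‖ ^ 2 := by rw [norm_star]; ring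

noncomputable def opSMulCLM (x : E) : A →L[ℂ] E :=
  LinearMap.mkContinuous
    { toFun := fun a => x <• a
      map_add' := op_smul_add x
      map_smul' := op_smul_smul_complex x }
    ‖x‖ (norm_op_smul_le x)

end

theorem inner_mul_inner_swap_le {x y : E} : ⟪y, x⟫ * ⟪x, y⟫ ≤ ‖x‖ ^ 2 • ⟪y, y⟫ := by
  rcases eq_or_ne x 0 with rfl | hx0
  · simp
  have hx : 0 < ‖x‖ ^ 2 := pow_pos (norm_pos_iff.mpr hx0) 2
  have key : ∀ a : A, 0 ≤ ‖x‖ ^ 2 • (star a * a) - ‖x‖ ^ 2 • (star a * ⟪x, y⟫)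
      - ‖x‖ ^ 2 • (⟪y, x⟫ * a) + ‖x‖ ^ 2 • (‖x‖ ^ 2 • ⟪y, y⟫) := fun a =>
    calc (0 : A) ≤ ⟪x <• a - ‖x‖ ^ 2 • y, x <• a - ‖x‖ ^ 2 • y⟫ := inner_self_nonneg
      _ = star a * ⟪x, x⟫ * a - ‖x‖ ^ 2 • (star a * ⟪x, y⟫)
            - ‖x‖ ^ 2 • (⟪y, x⟫ * a) + ‖x‖ ^ 2 • (‖x‖ ^ 2 • ⟪y, y⟫) := by
          simp only [inner_sub_right, inner_op_smul_right, inner_sub_left, inner_op_smul_left,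
            inner_smul_left_real, inner_smul_right_real, smul_mul_assoc, smul_sub, mul_assoc,
            sub_mul]
          abel
      _ ≤ ‖x‖ ^ 2 • (star a * a) - ‖x‖ ^ 2 • (star a * ⟪x, y⟫)
            - ‖x‖ ^ 2 • (⟪y, x⟫ * a) + ‖x‖ ^ 2 • (‖x‖ ^ 2 • ⟪y, y⟫) := by
          gcongr
          rw [norm_sq_eq x]
          exact CStarAlgebra.star_left_conjugate_le_norm_smul (hb := star_inner x x)
  specialize key ⟪x, y⟫
  rw [star_inner] at key
  simp only [sub_self, zero_sub, le_neg_add_iff_add_le, add_zero] at key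
  rwa [smul_le_smul_iff_of_pos_left hx] at key

theorem norm_inner_le {x y : E} : ‖⟪x, y⟫‖ ≤ ‖x‖ * ‖y‖ := by
  refine (pow_le_pow_iff_left₀ (norm_nonneg _) (by positivity) two_ne_zero).mp ?_
  calc ‖⟪x, y⟫‖ ^ 2 = ‖⟪y, x⟫ * ⟪x, y⟫‖ := by
        rw [← star_inner x y, CStarRing.norm_star_mul_self, pow_two]
    _ ≤ ‖‖x‖ ^ 2 • ⟪y, y⟫‖ := by
        refine CStarAlgebra.norm_le_norm_of_nonneg_of_le ?_ inner_mul_inner_swap_le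
        rw [← star_inner x y]
        exact star_mul_self_nonneg _
    _ = (‖x‖ * ‖y‖) ^ 2 := by
        rw [norm_smul, ← norm_sq_eq y, mul_pow, Real.norm_of_nonneg (by positivity)]

variable (A) in
noncomputable def innerCLM (x : E) : E →L[ℂ] A :=
  LinearMap.mkContinuous
    { toFun := fun y => ⟪x, y⟫
      map_add' := fun _ _ => inner_add_right
      map_smul' := fun _ _ => inner_smul_right_complex }
    ‖x‖ fun _ => norm_inner_le

/-- The projection onto the orthogonal complement of `x A`, when `⟪x, x⟫` is invertible. -/
noncomputable def orthProj (x : E) : E →L[ℂ] E :=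
  ContinuousLinearMap.id ℂ E - (opSMulCLM x).comp
    ((ContinuousLinearMap.mul ℂ A (Ring.inverse ⟪x, x⟫)).comp (innerCLM A x))

theorem orthProj_apply (x y : E) : orthProj x y = y - x <• (Ring.inverse ⟪x, x⟫ * ⟪x, y⟫) := rfl

theorem inner_orthProj_right {x : E} (hx : IsUnit ⟪x, x⟫) (y : E) : ⟪x, orthProj x y⟫ = 0 := by
  rw [orthProj_apply, inner_sub_right, inner_op_smul_right, ← mul_assoc,
    Ring.mul_inverse_cancel _ hx, one_mul, sub_self]

theorem inner_orthProj_left_of_inner_eq_zero {x f : E} (hf : ⟪x, f⟫ = 0) (y : E) :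
    ⟪orthProj x y, f⟫ = ⟪y, f⟫ := by
  rw [orthProj_apply, inner_sub_left, inner_op_smul_left, hf, mul_zero, sub_zero]

theorem orthProj_eq_self_of_inner_eq_zero {x y : E} (hy : ⟪x, y⟫ = 0) : orthProj x y = y := by
  rw [orthProj_apply, hy, mul_zero, op_smul_zero, sub_zero]

theorem orthProj_op_smul (x y : E) (a : A) : orthProj x (y <• a) = orthProj x y <• a := by
  rw [orthProj_apply, orthProj_apply, inner_op_smul_right, sub_op_smul, op_smul_op_smul,
    mul_assoc]

theorem inner_orthProj_orthProj {x : E} (hx : IsUnit ⟪x, x⟫) (y z : E) :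
    ⟪orthProj x y, orthProj x z⟫ = ⟪y, z⟫ - ⟪y, x⟫ * Ring.inverse ⟪x, x⟫ * ⟪x, z⟫ := by
  rw [inner_orthProj_left_of_inner_eq_zero (inner_orthProj_right hx z), orthProj_apply,
    inner_sub_right, inner_op_smul_right, mul_assoc]

theorem range_orthProj_op_smul {ι : Type*} (x : E) (k : ι → E) :
    Set.range (fun p : ι × A => orthProj x (k p.1) <• p.2) =
      orthProj x '' Set.range (fun p : ι × A => k p.1 <• p.2) := by
  simp only [← Set.range_comp, Function.comp_def, orthProj_op_smul]

end CStarModuleOld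

theorem closure_span_image_eq_of_retraction {R M N : Type*} [Semiring R] [AddCommMonoid M]
    [Module R M] [TopologicalSpace M] [AddCommMonoid N] [Module R N] [TopologicalSpace N]
    [T1Space N] (P : M →L[R] M) (L : M →L[R] N) (hLP : ∀ y, L (P y) = 0)
    (hPL : ∀ y, L y = 0 → P y = y) {s : Set M} (hs : Dense (Submodule.span R s : Set M)) :
    closure (Submodule.span R (P '' s) : Set M) = {y | L y = 0} := by
  apply subset_antisymm
  · refine closure_minimal (Submodule.span_le (p := LinearMap.ker (L : M →ₗ[R] N)).mpr ?_)
      (isClosed_singleton.preimage L.continuous)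
    rintro _ ⟨y, -, rfl⟩
    exact hLP y
  · intro y hy
    rw [← hPL y hy]
    exact closure_mono (Submodule.image_span_subset_span (P : M →ₗ[R] M) s)
      (map_mem_closure P.continuous (hs y) fun _ => Set.mem_image_of_mem P)

/-- if `K(s₀,s₀)` is invertible, then `E₀ = {f | f(s₀) = 0}` is a
reproducing kernel Hilbert C*-module on `S` whose kernel element at `s` is
`k₀ s = k s - k s₀ <• (K(s₀,s₀)⁻¹ * K(s₀,s))`: each `k₀ s` lies in `E₀`, evaluation on
`E₀` is reproduced by the `k₀ s`, their `A`-linear span is dense in `E₀`, and the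
reproducing kernel is `K₀(s,t) = K(s,t) - K(s,s₀) K(s₀,s₀)⁻¹ K(s₀,t)`. -/
theorem vanishing_submodule_is_rkhcm_with_reduced_kernel
    (R : RKHCM A S E) (s₀ : S) (hs₀ : IsUnit (inner A (R.k s₀) (R.k s₀) : A))
    (k₀ : S → E)
    (hk₀ : ∀ s, k₀ s = R.k s -
      R.k s₀ <• (Ring.inverse (inner A (R.k s₀) (R.k s₀) : A) * inner A (R.k s₀) (R.k s))) :
    (∀ s, R.toFun (k₀ s) s₀ = 0) ∧
    (∀ f : E, R.toFun f s₀ = 0 → ∀ s, R.toFun f s = inner A (k₀ s) f) ∧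
    (∀ s t, (inner A (k₀ s) (k₀ t) : A) =
      inner A (R.k s) (R.k t) -
        inner A (R.k s) (R.k s₀) * Ring.inverse (inner A (R.k s₀) (R.k s₀) : A) *
          inner A (R.k s₀) (R.k t)) ∧
    closure ((Submodule.span ℂ (Set.range fun p : S × A => k₀ p.1 <• p.2) :
        Submodule ℂ E) : Set E) = {f : E | R.toFun f s₀ = 0} := by
  obtain rfl : k₀ = fun s => CStarModuleOld.orthProj (R.k s₀) (R.k s) := funext hk₀
  have eval_eq_zero_iff (f : E) : R.toFun f s₀ = 0 ↔ inner A (R.k s₀) f = 0 := by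
    rw [R.eval_eq]
  refine ⟨fun s => ?_, fun f hf s => ?_, fun s t =>
    CStarModuleOld.inner_orthProj_orthProj hs₀ _ _, ?_⟩
  · rw [eval_eq_zero_iff]
    exact CStarModuleOld.inner_orthProj_right hs₀ _
  · rw [R.eval_eq, ← CStarModuleOld.inner_orthProj_left_of_inner_eq_zero
      ((eval_eq_zero_iff f).mp hf)]
  · simp only [eval_eq_zero_iff, CStarModuleOld.range_orthProj_op_smul]
    exact closure_span_image_eq_of_retraction _ (CStarModuleOld.innerCLM A (R.k s₀))
      (CStarModuleOld.inner_orthProj_right hs₀)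
      (fun _ => CStarModuleOld.orthProj_eq_self_of_inner_eq_zero) R.dense_span
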